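/- arXiv:2103.07885 — 2 statements merged into one kernel-verified Lean document; each statement's English description precedes it below -/
import Mathlib

section
/- Let f : List (ZMod 2) → ZMod 3 be any function satisfying: (i) f(α ++ [0,0] ++ β) = f(α ++ β) for all words α, β; (ii) f(α ++ [1,1] ++ β) = f(α ++ β) for all α, β; (iii) f(α ++ [0]) = f(α) for all α; (iv) f((10)^n) = 0, 2, 1 according as n ≡ 0, 1, 2 mod 3; and (v) f((01)^n) = 0, 1, 2 according as n ≡ 0, 1, 2 mod 3. Then f coincides with the alternating-sum weight ω given by ω([a₁,…,aₙ]) = Σ_{i=1}^n (-1)^i aᵢ mod 3. -/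
/-- The weight of a binary word `a₁…aₙ`: the alternating sum `∑ (-1)^i aᵢ` mod 3. -/
def omega (l : List (ZMod 2)) : ZMod 3 :=
  (l.zipIdx.map (fun p => (-1 : ZMod 3) ^ (p.2 + 1) * (p.1.val : ZMod 3))).sum

namespace EqOmegaAux

def W : List (ZMod 2) → ZMod 3
  | [] => 0
  | a :: l => -(a.val : ZMod 3) - W l

lemma enumFrom_sum (l : List (ZMod 2)) : ∀ n : ℕ,
    ((l.zipIdx n).map (fun p => (-1 : ZMod 3) ^ (p.2 + 1) * (p.1.val : ZMod 3))).sum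
      = (-1) ^ n * W l := by
  induction l with
  | nil => intro n; simp [W]
  | cons a t ih =>
      intro n
      simp only [List.zipIdx_cons, List.map_cons, List.sum_cons]
      rw [ih (n+1), W]
      ring

lemma omega_eq_W (l : List (ZMod 2)) : omega l = W l := by
  have := enumFrom_sum l 0
  simpa [omega] using this


lemma val0 : ((0 : ZMod 2).val : ZMod 3) = 0 := by decide
lemma val1 : ((1 : ZMod 2).val : ZMod 3) = 1 := by decide

lemma W_cons00 (α β : List (ZMod 2)) : W (α ++ 0 :: 0 :: β) = W (α ++ β) := by
  induction α with
  | nil => simp [W, val0]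
  | cons a t ih => simp [W, ih]

lemma W_append00 (α β : List (ZMod 2)) : W (α ++ [0, 0] ++ β) = W (α ++ β) := by
  rw [List.append_assoc]; exact W_cons00 α β

lemma W_cons11 (α β : List (ZMod 2)) : W (α ++ 1 :: 1 :: β) = W (α ++ β) := by
  induction α with
  | nil => simp [W, val1]
  | cons a t ih => simp [W, ih]

lemma W_append11 (α β : List (ZMod 2)) : W (α ++ [1, 1] ++ β) = W (α ++ β) := by
  rw [List.append_assoc]; exact W_cons11 α β

lemma W_append0 (α : List (ZMod 2)) : W (α ++ [0]) = W α := by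
  induction α with
  | nil => simp [W, val0]
  | cons a t ih => simp [W, ih]

def F (a b : ZMod 2) (k : ℕ) : List (ZMod 2) := (List.replicate k [a, b]).flatten

lemma F_succ (a b : ZMod 2) (k : ℕ) : F a b (k+1) = a :: b :: F a b k := by
  simp [F, List.replicate_succ]

lemma F_succ' (a b : ZMod 2) (k : ℕ) : F a b (k+1) = F a b k ++ [a, b] := by
  simp [F, List.replicate_succ']

lemma W_F01 (k : ℕ) : W (F 0 1 k) = (k : ZMod 3) := by
  induction k with
  | zero => simp [F, W]
  | succ k ih => rw [F_succ, W, W, ih, val0, val1]; push_cast; ring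

lemma W_F10 (k : ℕ) : W (F 1 0 k) = -(k : ZMod 3) := by
  induction k with
  | zero => simp [F, W]
  | succ k ih => rw [F_succ, W, W, ih, val0, val1]; push_cast; ring

lemma valIf (k : ℕ) :
    (if k % 3 = 0 then (0 : ZMod 3) else if k % 3 = 1 then 1 else 2) = (k : ZMod 3) := by
  rw [← ZMod.natCast_mod k 3]
  have h : k % 3 < 3 := Nat.mod_lt _ (by norm_num)
  set r := k % 3 with hr
  interval_cases r <;> decide

lemma valIf' (k : ℕ) :
    (if k % 3 = 0 then (0 : ZMod 3) else if k % 3 = 1 then 2 else 1) = -(k : ZMod 3) := by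
  rw [← ZMod.natCast_mod k 3]
  have h : k % 3 < 3 := Nat.mod_lt _ (by norm_num)
  set r := k % 3 with hr
  interval_cases r <;> decide

def G : ZMod 2 → ℕ → List (ZMod 2)
  | _, 0 => []
  | a, n + 1 => a :: G (1 - a) n

lemma zmod2_cases : ∀ a : ZMod 2, a = 0 ∨ a = 1 := by decide
lemma sub_ne : ∀ a b : ZMod 2, a ≠ b → b = 1 - a := by decide

lemma e10 : (1 - 0 : ZMod 2) = 1 := by decide
lemma e11 : (1 - 1 : ZMod 2) = 0 := by decide

lemma L1 (k : ℕ) : (0 : ZMod 2) :: F 1 0 k = F 0 1 k ++ [0] := by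
  induction k with
  | zero => simp [F]
  | succ k ih =>
      rw [F_succ, F_succ]
      simp only [List.cons_append]
      rw [← ih]

lemma L2 (k : ℕ) : (1 : ZMod 2) :: F 0 1 k = F 1 0 k ++ [1] := by
  induction k with
  | zero => simp [F]
  | succ k ih =>
      rw [F_succ, F_succ]
      simp only [List.cons_append]
      rw [← ih]

lemma G_even (k : ℕ) : G 0 (2*k) = F 0 1 k ∧ G 1 (2*k) = F 1 0 k := by
  induction k with
  | zero => simp [G, F]
  | succ k ih =>
      have h2 : 2*(k+1) = (2*k) + 1 + 1 := by ring
      rw [h2]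
      constructor
      · rw [G, e10, G, e11, F_succ, ih.1]
      · rw [G, e11, G, e10, F_succ, ih.2]

lemma G_odd (k : ℕ) : G 0 (2*k+1) = F 0 1 k ++ [0] ∧ G 1 (2*k+1) = F 1 0 k ++ [1] := by
  constructor
  · rw [G, e10, (G_even k).2, L1]
  · rw [G, e11, (G_even k).1, L2]

lemma chain'_G : ∀ l : List (ZMod 2), l.Chain' (· ≠ ·) → ∃ a, l = G a l.length := by
  intro l
  induction l with
  | nil => intro _; exact ⟨0, rfl⟩
  | cons a t ih =>
      intro h
      unfold List.Chain' at h
      rw [List.isChain_cons] at h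
      obtain ⟨b, hb⟩ := ih h.2
      cases t with
      | nil => exact ⟨a, by simp [G]⟩
      | cons c t' =>
          have hcb : c = b := by
            rw [List.length_cons, G] at hb
            exact (List.cons.injEq _ _ _ _ ▸ hb).1
          have hac : a ≠ c := h.1 c rfl
          refine ⟨a, ?_⟩
          rw [List.length_cons, List.length_cons, G, ← sub_ne a c hac, hcb]
          rw [List.length_cons] at hb
          rw [← hb, hcb]

lemma not_chain' : ∀ l : List (ZMod 2), ¬ l.Chain' (· ≠ ·) → ∃ α a β, l = α ++ [a, a] ++ β := by
  intro l
  induction l with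
  | nil => intro h; exact absurd List.isChain_nil h
  | cons a t ih =>
      intro h
      cases t with
      | nil => exact absurd (List.isChain_singleton a) h
      | cons b t' =>
          by_cases hab : a = b
          · exact ⟨[], a, t', by simp [hab]⟩
          · have hnc : ¬ (b :: t').Chain' (· ≠ ·) :=
              fun hc => h (List.isChain_cons_cons.mpr ⟨hab, hc⟩)
            obtain ⟨α, c, β, hd⟩ := ih hnc
            exact ⟨a :: α, c, β, by simp [hd]⟩

end EqOmegaAux

open EqOmegaAux

theorem eq_omega_of_props (f : List (ZMod 2) → ZMod 3)
    (h00 : ∀ α β : List (ZMod 2), f (α ++ [0, 0] ++ β) = f (α ++ β))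
    (h11 : ∀ α β : List (ZMod 2), f (α ++ [1, 1] ++ β) = f (α ++ β))
    (h0 : ∀ α : List (ZMod 2), f (α ++ [0]) = f α)
    (h10 : ∀ n : ℕ, f (List.flatten (List.replicate n ([1, 0] : List (ZMod 2)))) =
      if n % 3 = 0 then 0 else if n % 3 = 1 then 2 else 1)
    (h01 : ∀ n : ℕ, f (List.flatten (List.replicate n ([0, 1] : List (ZMod 2)))) =
      if n % 3 = 0 then 0 else if n % 3 = 1 then 1 else 2) :
    f = omega := by
  have fF01 : ∀ k, f (F 0 1 k) = (k : ZMod 3) := fun k => (h01 k).trans (valIf k)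
  have fF10 : ∀ k, f (F 1 0 k) = -(k : ZMod 3) := fun k => (h10 k).trans (valIf' k)
  have H : ∀ n : ℕ, ∀ l : List (ZMod 2), l.length ≤ n → f l = W l := by
    intro n
    induction n with
    | zero =>
        intro l hl
        have : l = [] := List.length_eq_zero_iff.mp (Nat.le_zero.mp hl)
        subst this
        simpa [F, W] using fF01 0
    | succ n ih =>
        intro l hl
        by_cases hc : l.Chain' (· ≠ ·)
        · obtain ⟨a, ha⟩ := chain'_G l hc
          rcases zmod2_cases a with rfl | rfl
          · rcases Nat.even_or_odd l.length with ⟨r, hr⟩ | ⟨r, hr⟩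
            · have hr' : l.length = 2 * r := by omega
              rw [hr'] at ha
              rw [ha, (G_even r).1, fF01, W_F01]
            · rw [hr] at ha
              rw [ha, (G_odd r).1, h0, W_append0, fF01, W_F01]
          · rcases Nat.even_or_odd l.length with ⟨r, hr⟩ | ⟨r, hr⟩
            · have hr' : l.length = 2 * r := by omega
              rw [hr'] at ha
              rw [ha, (G_even r).2, fF10, W_F10]
            · rw [hr] at ha
              have key : F 1 0 r ++ [1] ++ [0] = F 1 0 (r + 1) := by
                rw [F_succ', List.append_assoc]; rfl
              rw [ha, (G_odd r).2, ← h0 (F 1 0 r ++ [1]), key, fF10,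
                ← W_append0 (F 1 0 r ++ [1]), key, W_F10]
        · obtain ⟨α, a, β, rfl⟩ := not_chain' l hc
          have hlen : (α ++ β).length ≤ n := by
            simp only [List.length_append, List.length_cons, List.length_singleton] at hl ⊢
            omega
          rcases zmod2_cases a with rfl | rfl
          · rw [h00, W_append00]; exact ih _ hlen
          · rw [h11, W_append11]; exact ih _ hlen
  funext l
  rw [omega_eq_W]
  exact H l.length l le_rfl
end

section
/- In Thompson's group F presented by ⟨x₀, x₁, … | xₙxₖ = xₖx_{n+1} for k < n⟩, the following identity holds: (x₀x₁x₄⁻¹x₀⁻³)(x₀x₁²x₀⁻³)(x₀³x₄x₁⁻¹x₀⁻¹)(x₀³x₄x₁⁻¹x₀⁻¹) = x₁x₂. -/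
/-- The defining relators of Thompson's group `F`:
`xₖ⁻¹ xₙ xₖ x_{n+1}⁻¹` for all `k < n`. -/
def thompsonRels : Set (FreeGroup ℕ) :=
  {r | ∃ k n : ℕ, k < n ∧
    r = (FreeGroup.of k)⁻¹ * FreeGroup.of n * FreeGroup.of k * (FreeGroup.of (n + 1))⁻¹}

/-- Thompson's group `F`, presented by `⟨x₀, x₁, … | xₙ xₖ = xₖ x_{n+1} (k < n)⟩`. -/
abbrev ThompsonF : Type := PresentedGroup thompsonRels

/-- The generator `xᵢ` of Thompson's group `F`. -/
def x (i : ℕ) : ThompsonF := PresentedGroup.of i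

lemma xrel {k n : ℕ} (h : k < n) : x n * x k = x k * x (n + 1) := by
  have hm : ((FreeGroup.of k)⁻¹ * FreeGroup.of n * FreeGroup.of k *
      (FreeGroup.of (n + 1))⁻¹ : FreeGroup ℕ) ∈ Subgroup.normalClosure thompsonRels :=
    Subgroup.subset_normalClosure ⟨k, n, h, rfl⟩
  have h1 : ((x k)⁻¹ * x n * x k * (x (n+1))⁻¹ : ThompsonF) = 1 := by
    have : (QuotientGroup.mk ((FreeGroup.of k)⁻¹ * FreeGroup.of n * FreeGroup.of k *
        (FreeGroup.of (n + 1))⁻¹) : ThompsonF) = 1 := (QuotientGroup.eq_one_iff _).mpr hm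
    exact this
  calc x n * x k = x k * ((x k)⁻¹ * x n * x k * (x (n+1))⁻¹) * x (n+1) := by group
    _ = x k * x (n+1) := by rw [h1]; group

lemma xrelB {k n : ℕ} (h : k < n) : (x k)⁻¹ * x n = x (n + 1) * (x k)⁻¹ := by
  have := xrel h
  calc (x k)⁻¹ * x n = (x k)⁻¹ * (x n * x k) * (x k)⁻¹ := by group
    _ = _ := by rw [this]; group

lemma xrelC {k n : ℕ} (h : k < n) : (x n)⁻¹ * x k = x k * (x (n + 1))⁻¹ := by
  have := xrel h
  calc (x n)⁻¹ * x k = (x n)⁻¹ * (x n * x k) * (x (n+1))⁻¹ := by rw [this]; group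
    _ = _ := by group

lemma xrelD {k n : ℕ} (h : k < n) : (x k)⁻¹ * (x n)⁻¹ = (x (n + 1))⁻¹ * (x k)⁻¹ := by
  have := xrel h
  calc (x k)⁻¹ * (x n)⁻¹ = (x n * x k)⁻¹ := by group
    _ = (x k * x (n+1))⁻¹ := by rw [this]
    _ = _ := by group

lemma moveA {k n : ℕ} (h : k < n) (c : ThompsonF) :
    x n * (x k * c) = x k * (x (n + 1) * c) := by rw [← mul_assoc, xrel h, mul_assoc]

lemma moveB {k n : ℕ} (h : k < n) (c : ThompsonF) :
    (x k)⁻¹ * (x n * c) = x (n + 1) * ((x k)⁻¹ * c) := by rw [← mul_assoc, xrelB h, mul_assoc]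

lemma moveC {k n : ℕ} (h : k < n) (c : ThompsonF) :
    (x n)⁻¹ * (x k * c) = x k * ((x (n + 1))⁻¹ * c) := by rw [← mul_assoc, xrelC h, mul_assoc]

lemma moveD {k n : ℕ} (h : k < n) (c : ThompsonF) :
    (x k)⁻¹ * ((x n)⁻¹ * c) = (x (n + 1))⁻¹ * ((x k)⁻¹ * c) := by
  rw [← mul_assoc, xrelD h, mul_assoc]

lemma xrelE {k n : ℕ} (h : k + 1 < n) : x n * (x k)⁻¹ = (x k)⁻¹ * x (n - 1) := by
  have h' : k < n - 1 := by omega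
  have := xrelB h'
  have hn : n - 1 + 1 = n := by omega
  rw [hn] at this
  rw [← this]

lemma moveE {k n : ℕ} (h : k + 1 < n) (c : ThompsonF) :
    x n * ((x k)⁻¹ * c) = (x k)⁻¹ * (x (n - 1) * c) := by rw [← mul_assoc, xrelE h, mul_assoc]

theorem theta_sigma_x1_eq :
    (x 0 * x 1 * (x 4)⁻¹ * (x 0 ^ 3)⁻¹) * (x 0 * x 1 ^ 2 * (x 0 ^ 3)⁻¹) *
      (x 0 ^ 3 * x 4 * (x 1)⁻¹ * (x 0)⁻¹) * (x 0 ^ 3 * x 4 * (x 1)⁻¹ * (x 0)⁻¹) =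
    x 1 * x 2 := by
  simp only [pow_succ, pow_zero, one_mul, mul_inv_rev, mul_assoc, inv_mul_cancel_left,
    mul_inv_cancel_left]
  simp only [xrel, xrelB, xrelC, xrelD, moveA, moveB, moveC, moveD, mul_assoc,
    inv_mul_cancel_left, mul_inv_cancel_left, inv_mul_cancel, mul_inv_cancel, one_mul, mul_one,
    Nat.reduceAdd, Nat.reduceLT]
  simp only [xrelE, moveE, mul_assoc, inv_mul_cancel_left, mul_inv_cancel_left,
    inv_mul_cancel, mul_inv_cancel, one_mul, mul_one, Nat.reduceAdd, Nat.reduceSub,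
    Nat.reduceLT]
end
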